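/- Let n ≥ 3, let a > 0 and k be integers, and let x = (x_1,…,x_n) ∈ ℤ^n be a solution of the Markoff–Hurwitz equation with 0 < −x_1 ≤ x_2 ≤ ⋯ ≤ x_n and a·x_1⋯x_{n−2} < −2. Then Δ(𝒱_{a,n,i}(x)) > Δ(x) for every i = 1,…,n. -/

import Mathlib

open Finset

/-- The set of integer solutions of the Markoff–Hurwitz equation
`x₁² + ⋯ + xₙ² − a·x₁⋯xₙ = k`. -/
def mhSol (n : ℕ) (a k : ℤ) : Set (Fin n → ℤ) :=
  {x | ∑ i, x i ^ 2 - a * ∏ i, x i = k}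

/-- The Vieta involution at index `i`: replaces `x i` with `a·(∏_{j ≠ i} x j) − x i`. -/
def mhVieta (n : ℕ) (a : ℤ) (i : Fin n) (x : Fin n → ℤ) : Fin n → ℤ :=
  Function.update x i (a * ∏ j ∈ Finset.univ.erase i, x j - x i)

/-- The double sign change at indices `s, t`. -/
def mhSign (n : ℕ) (s t : Fin n) (x : Fin n → ℤ) : Fin n → ℤ :=
  fun j => if j = s ∨ j = t then -x j else x j

/-- The permutation action `σ(x) = (x_{σ(1)}, …, x_{σ(n)})`. -/
def mhPerm (n : ℕ) (σ : Equiv.Perm (Fin n)) (x : Fin n → ℤ) : Fin n → ℤ :=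
  fun i => x (σ i)

/-- The group `Γ_{a,n}` of bijections of `ℤⁿ` generated by the Vieta involutions,
the double sign changes, and the permutations. -/
def mhGamma (n : ℕ) (a : ℤ) : Subgroup (Equiv.Perm (Fin n → ℤ)) :=
  Subgroup.closure {e : Equiv.Perm (Fin n → ℤ) |
    (∃ i : Fin n, ∀ x, e x = mhVieta n a i x) ∨
    (∃ s t : Fin n, s < t ∧ ∀ x, e x = mhSign n s t x) ∨
    (∃ σ : Equiv.Perm (Fin n), ∀ x, e x = mhPerm n σ x)}

/-- The height function `Δ(x) = |x₁| + ⋯ + |xₙ|`. -/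
def mhDelta (n : ℕ) (x : Fin n → ℤ) : ℤ := ∑ i, |x i|

/-- for a reduced solution with negative first coordinate
(`0 < −x₁ ≤ x₂ ≤ ⋯ ≤ xₙ` and `a·x₁⋯x_{n−2} < −2`), every Vieta involution strictly
increases the height. -/
theorem mh_negative_reduced (n : ℕ) (hn : 3 ≤ n) (a k : ℤ) (ha : 0 < a)
    (x : Fin n → ℤ) (hx : x ∈ mhSol n a k)
    (hneg : x ⟨0, by omega⟩ < 0)
    (h12 : -x ⟨0, by omega⟩ ≤ x ⟨1, by omega⟩)
    (hmono : ∀ i j : Fin n, 0 < i.val → i ≤ j → x i ≤ x j)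
    (hbig : a * ∏ j ∈ Finset.univ.filter (fun j : Fin n => j.val < n - 2), x j < -2) :
    ∀ i : Fin n, mhDelta n x < mhDelta n (mhVieta n a i x) := by
  intro i
  have hx1 : (0:ℤ) < x ⟨1, by omega⟩ := by linarith
  have hpos : ∀ j : Fin n, 0 < j.val → 0 < x j := by
    intro j hj
    have := hmono ⟨1, by omega⟩ j (by simp) (by rw [Fin.le_def]; simp; omega)
    linarith
  set v := a * ∏ j ∈ Finset.univ.erase i, x j - x i with hv
  have key : |x i| < |v| := by
    by_cases h0 : i.val = 0
    · have hie : i = ⟨0, by omega⟩ := Fin.ext h0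
      have hprod : 0 < ∏ j ∈ Finset.univ.erase i, x j := by
        apply Finset.prod_pos
        intro j hj
        have hji : j ≠ i := Finset.ne_of_mem_erase hj
        have hj0 : j.val ≠ 0 := fun h => hji (Fin.ext (by omega))
        exact hpos j (by omega)
      have hQ : 0 < a * ∏ j ∈ Finset.univ.erase i, x j := mul_pos ha hprod
      have hxi : x i < 0 := hie ▸ hneg
      have hvpos : 0 < v := by rw [hv]; linarith
      rw [abs_of_neg hxi, abs_of_pos hvpos]; rw [hv]; linarith
    · have hxi : 0 < x i := hpos i (by omega)
      set z : Fin n := ⟨0, by omega⟩ with hz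
      have hzi : z ≠ i := fun h => h0 (by rw [← h])
      have hz0 : z.val = 0 := rfl
      have hzmem : z ∈ Finset.univ.erase i := Finset.mem_erase.mpr ⟨hzi, Finset.mem_univ z⟩
      have hsplit : ∏ j ∈ Finset.univ.erase i, x j
          = x z * ∏ j ∈ (Finset.univ.erase i).erase z, x j :=
        (Finset.mul_prod_erase _ _ hzmem).symm
      have hrest : 0 < ∏ j ∈ (Finset.univ.erase i).erase z, x j := by
        apply Finset.prod_pos
        intro j hj
        have hjz : j ≠ z := Finset.ne_of_mem_erase hj
        refine hpos j ?_
        by_contra hc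
        exact hjz (Fin.ext (by omega))
      have hprodneg : ∏ j ∈ Finset.univ.erase i, x j < 0 := by
        rw [hsplit]
        exact mul_neg_of_neg_of_pos hneg hrest
      have hQ : a * ∏ j ∈ Finset.univ.erase i, x j < 0 := mul_neg_of_pos_of_neg ha hprodneg
      have hvneg : v < 0 := by rw [hv]; linarith
      rw [abs_of_pos hxi, abs_of_neg hvneg]; rw [hv]; linarith
  have hsum : ∀ f : Fin n → ℤ, ∑ j, f j = f i + ∑ j ∈ Finset.univ.erase i, f j :=
    fun f => (Finset.add_sum_erase _ f (Finset.mem_univ i)).symm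
  have h1 : mhVieta n a i x i = v := by simp [mhVieta, hv]
  have h2 : ∑ j ∈ Finset.univ.erase i, |mhVieta n a i x j| = ∑ j ∈ Finset.univ.erase i, |x j| := by
    refine Finset.sum_congr rfl fun j hj => ?_
    rw [mhVieta, Function.update_of_ne (Finset.ne_of_mem_erase hj)]
  rw [mhDelta, mhDelta, hsum (fun j => |x j|), hsum (fun j => |mhVieta n a i x j|)]
  simp only [h1, h2]
  linarith
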